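/- arXiv:1505.04765 — 3 statements merged into one kernel-verified Lean document; each statement's English description precedes it below -/
import Mathlib

section
/- The counit axioms hold for the coproduct on A: for every element X of A, (id_A ⊗ ē)(Δ(X)) = X = (ē ⊗ id_A)(Δ(X)), under the natural identifications A ⊗ ℚ ≅ A ≅ ℚ ⊗ A. -/
open scoped TensorProduct

set_option synthInstance.maxHeartbeats 1000000
set_option maxHeartbeats 1000000

/-- Rooted trees with vertices labeled by letters `x_i` (`i : ℕ`): an irreducible
parenthesized word `(X x_i)` is a root labeled `x_i` with the forest `X` attached. -/
inductive PTree : Type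
  | node : ℕ → List PTree → PTree

/-- Parenthesized words: finite commutative products (multisets) of irreducible words. -/
abbrev Word : Type := Multiset PTree

/-- The free ℚ-vector space `A` on parenthesized words, as a commutative unital
associative ℚ-algebra (the product is induced by the product of words, the unit is the
empty word `e = word 0`). -/
abbrev A : Type := AddMonoidAlgebra ℚ Word

/-- The basis vector of `A` corresponding to a parenthesized word. -/
noncomputable def word (m : Word) : A := AddMonoidAlgebra.single m 1

/-- The grafting operator `B_{(x_i)}`, sending a word `X` to `(X x_i)`. -/
noncomputable def B (i : ℕ) : A →ₗ[ℚ] A :=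
  AddMonoidAlgebra.mapDomainLinearMap ℚ ℚ (fun m : Word => ({PTree.node i m.toList} : Word))

/-- The counit `ē : A → ℚ`, killing every nonempty word and sending `e` to `1`. -/
noncomputable def ebar : A →ₗ[ℚ] ℚ :=
  Finsupp.lapply 0 ∘ₗ (AddMonoidAlgebra.coeffLinearEquiv ℚ).toLinearMap

/-- The unit map `E : ℚ → A`, `q ↦ q • e`. -/
noncomputable def Eu : ℚ →ₗ[ℚ] A := AddMonoidAlgebra.lsingle 0

/-- The projection `P₁ = id_A − E ∘ ē`. -/
noncomputable def P1 : A →ₗ[ℚ] A := LinearMap.id - Eu.comp ebar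

lemma ebar_apply (x : A) : ebar x = x.coeff 0 := rfl

open scoped Classical in
lemma ebar_single (m : Word) (r : ℚ) : ebar (AddMonoidAlgebra.single m r) = if m = 0 then r else 0 := by
  classical
  rw [ebar_apply, AddMonoidAlgebra.coeff_single, Finsupp.single_apply]

lemma ebar_mul (x y : A) : ebar (x * y) = ebar x * ebar y := by
  induction x using AddMonoidAlgebra.induction_linear with
  | zero => simp
  | add f g hf hg => simp [add_mul, hf, hg]
  | single a r =>
    induction y using AddMonoidAlgebra.induction_linear with
    | zero => simp
    | add f g hf hg => simp [mul_add, hf, hg]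
    | single b s =>
      rw [AddMonoidAlgebra.single_mul_single]
      simp only [ebar_single]
      by_cases ha : a = 0 <;> by_cases hb : b = 0 <;>
        simp_all [add_eq_zero]

lemma ebar_B (i : ℕ) (x : A) : ebar (B i x) = 0 := by
  have h0 : (0 : Word) ∉ Set.range (fun m : Word => ({PTree.node i m.toList} : Word)) := by
    rintro ⟨m, hm⟩
    exact absurd hm.symm (by simp)
  have hB : (B i x).coeff = Finsupp.mapDomain (fun m : Word => ({PTree.node i m.toList} : Word)) x.coeff := rfl
  rw [ebar_apply, hB, Finsupp.mapDomain_notin_range _ _ h0]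

lemma ebar_Eu (q : ℚ) : ebar (Eu q) = q := by
  rw [show Eu q = AddMonoidAlgebra.single 0 q from rfl, ebar_apply, AddMonoidAlgebra.coeff_single, Finsupp.single_eq_same]

lemma ebar_P1 (x : A) : ebar (P1 x) = 0 := by
  simp [P1, ebar_Eu]

noncomputable def Fmap : A ⊗[ℚ] A →ₗ[ℚ] A :=
  (TensorProduct.rid ℚ A).toLinearMap ∘ₗ TensorProduct.map LinearMap.id ebar
noncomputable def Gmap : A ⊗[ℚ] A →ₗ[ℚ] A :=
  (TensorProduct.lid ℚ A).toLinearMap ∘ₗ TensorProduct.map ebar LinearMap.id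

lemma Fmap_tmul (a b : A) : Fmap (a ⊗ₜ[ℚ] b) = ebar b • a := by simp [Fmap]
lemma Gmap_tmul (a b : A) : Gmap (a ⊗ₜ[ℚ] b) = ebar a • b := by simp [Gmap]

lemma Fmap_mul (u v : A ⊗[ℚ] A) : Fmap (u * v) = Fmap u * Fmap v := by
  induction u using TensorProduct.induction_on with
  | zero => simp only [zero_mul, map_zero]
  | add u1 u2 h1 h2 => simp only [add_mul, map_add, h1, h2]
  | tmul a b =>
    induction v using TensorProduct.induction_on with
    | zero => simp only [mul_zero, map_zero]
    | add v1 v2 h1 h2 => simp only [mul_add, map_add, h1, h2]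
    | tmul c d =>
      rw [Algebra.TensorProduct.tmul_mul_tmul]
      simp [Fmap_tmul, ebar_mul, smul_smul, smul_mul_smul_comm, mul_comm]

lemma Gmap_mul (u v : A ⊗[ℚ] A) : Gmap (u * v) = Gmap u * Gmap v := by
  induction u using TensorProduct.induction_on with
  | zero => simp only [zero_mul, map_zero]
  | add u1 u2 h1 h2 => simp only [add_mul, map_add, h1, h2]
  | tmul a b =>
    induction v using TensorProduct.induction_on with
    | zero => simp only [mul_zero, map_zero]
    | add v1 v2 h1 h2 => simp only [mul_add, map_add, h1, h2]
    | tmul c d =>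
      rw [Algebra.TensorProduct.tmul_mul_tmul]
      simp [Gmap_tmul, ebar_mul, smul_smul, smul_mul_smul_comm, mul_comm]

lemma Fmap_map_B (i : ℕ) (w : A ⊗[ℚ] A) :
    Fmap (TensorProduct.map LinearMap.id (B i) w) = 0 := by
  induction w using TensorProduct.induction_on with
  | zero => simp only [map_zero]
  | add u v hu hv => simp only [map_add, hu, hv, add_zero]
  | tmul a b => simp [Fmap_tmul, ebar_B]

lemma Gmap_map_BP (i : ℕ) (w : A ⊗[ℚ] A) :
    Gmap (TensorProduct.map LinearMap.id (B i) (TensorProduct.map P1 LinearMap.id w)) = 0 := by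
  induction w using TensorProduct.induction_on with
  | zero => simp only [map_zero]
  | add u v hu hv => simp only [map_add, hu, hv, add_zero]
  | tmul a b => simp [Gmap_tmul, ebar_P1]

lemma word_mul (m n : Word) : word m * word n = word (m + n) := by
  simp [word, AddMonoidAlgebra.single_mul_single]

lemma ebar_word_zero : ebar (word 0) = 1 := by simp [word, ebar_single]

lemma ebar_word_node (i : ℕ) (l : List PTree) : ebar (word {PTree.node i l}) = 0 := by
  simp [word, ebar_single]


theorem counit_axioms
    (Δ : A →ₗ[ℚ] A ⊗[ℚ] A)
    (hΔe : Δ (word 0) = word 0 ⊗ₜ[ℚ] word 0)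
    (hΔB : ∀ (i : ℕ) (l : List PTree),
      Δ (word {PTree.node i l}) =
        word {PTree.node i l} ⊗ₜ[ℚ] word 0 + word 0 ⊗ₜ[ℚ] word {PTree.node i l} +
          TensorProduct.map LinearMap.id (B i)
            (TensorProduct.map P1 LinearMap.id (Δ (word (l : Multiset PTree)))))
    (hΔm : ∀ X Y : Word, Δ (word X * word Y) = Δ (word X) * Δ (word Y)) :
    ∀ a : A,
      TensorProduct.rid ℚ A (TensorProduct.map LinearMap.id ebar (Δ a)) = a ∧
      TensorProduct.lid ℚ A (TensorProduct.map ebar LinearMap.id (Δ a)) = a := by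
  have node : ∀ (i : ℕ) (l : List PTree),
      Fmap (Δ (word {PTree.node i l})) = word {PTree.node i l} ∧
      Gmap (Δ (word {PTree.node i l})) = word {PTree.node i l} := by
    intro i l
    rw [hΔB i l]
    constructor
    · simp only [map_add, Fmap_tmul, Fmap_map_B, ebar_word_zero, ebar_word_node,
        one_smul, zero_smul, add_zero]
    · simp only [map_add, Gmap_tmul, Gmap_map_BP, ebar_word_zero, ebar_word_node,
        one_smul, zero_smul, add_zero, zero_add]
  have key : ∀ m : Word, Fmap (Δ (word m)) = word m ∧ Gmap (Δ (word m)) = word m := by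
    intro m
    induction m using Multiset.induction_on with
    | empty =>
      rw [hΔe]
      exact ⟨by rw [Fmap_tmul, ebar_word_zero, one_smul],
             by rw [Gmap_tmul, ebar_word_zero, one_smul]⟩
    | cons t s ih =>
      obtain ⟨i, l⟩ := t
      have hw : word (PTree.node i l ::ₘ s) = word {PTree.node i l} * word s := by
        rw [word_mul, Multiset.singleton_add]
      rw [hw, hΔm]
      exact ⟨by rw [Fmap_mul, (node i l).1, ih.1],
             by rw [Gmap_mul, (node i l).2, ih.2]⟩
  have main : ∀ a : A, Fmap (Δ a) = a ∧ Gmap (Δ a) = a := by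
    intro a
    induction a using AddMonoidAlgebra.induction_linear with
    | zero => simp
    | add f g hf hg =>
      simp only [map_add]
      exact ⟨by rw [hf.1, hg.1], by rw [hf.2, hg.2]⟩
    | single m r =>
      have hs : (AddMonoidAlgebra.single m r : A) = r • word m := by
        rw [word, AddMonoidAlgebra.smul_single, smul_eq_mul, mul_one]
      rw [hs]
      simp only [map_smul]
      exact ⟨by rw [(key m).1], by rw [(key m).2]⟩
  exact fun a => ⟨(main a).1, (main a).2⟩
end

section
/- For all real ε > 0 and c > 0, the fully renormalized toy-model amplitude of the graph ((x_1)(x_2)x_1), namely X_r(ε, c) := (T1 + T2 + T3 + T4)(c) − (T1 + T2 + T3 + T4)(1), where (T1 + T2 + T3 + T4)(c) = ∫_c^∞ x^(−1−ε)(∫_x^∞ y^(−1−2ε) dy)(∫_x^∞ z^(−1−ε) dz) dx − (∫_1^∞ z^(−1−ε) dz) ∫_c^∞ x^(−1−ε)(∫_x^∞ y^(−1−2ε) dy) dx − (∫_1^∞ y^(−1−2ε) dy) ∫_c^∞ x^(−1−ε)(∫_x^∞ z^(−1−ε) dz) dx + (∫_1^∞ y^(−1−2ε) dy)(∫_1^∞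 z^(−1−ε) dz)(∫_c^∞ x^(−1−ε) dx), satisfies X_r(ε, c) = −∫_1^c x^(−1−ε)(∫_1^x y^(−1−2ε) dy)(∫_1^x z^(−1−ε) dz) dx, where ∫_1^c and ∫_1^x denote oriented interval integrals. -/
open MeasureTheory Set Filter

/-- The four-term combination `T1 + T2 + T3 + T4` for the toy-model graph
`((x_1)(x_2)x_1)` with infrared cutoff `c`: the bare amplitude plus the three
subdivergence counterterm contributions (renormalization point `c = 1`). -/
noncomputable def Tsum (ε c : ℝ) : ℝ :=
  (∫ x in Ioi c, x ^ (-1 - ε) * (∫ y in Ioi x, y ^ (-1 - 2 * ε)) * (∫ z in Ioi x, z ^ (-1 - ε)))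
    - (∫ z in Ioi (1 : ℝ), z ^ (-1 - ε)) *
        (∫ x in Ioi c, x ^ (-1 - ε) * (∫ y in Ioi x, y ^ (-1 - 2 * ε)))
    - (∫ y in Ioi (1 : ℝ), y ^ (-1 - 2 * ε)) *
        (∫ x in Ioi c, x ^ (-1 - ε) * (∫ z in Ioi x, z ^ (-1 - ε)))
    + (∫ y in Ioi (1 : ℝ), y ^ (-1 - 2 * ε)) * (∫ z in Ioi (1 : ℝ), z ^ (-1 - ε)) *
        (∫ x in Ioi c, x ^ (-1 - ε))

private lemma ioiInt (b x : ℝ) (hb : 0 < b) (hx : 0 < x) :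
    ∫ y in Ioi x, y ^ (-1 - b) = x ^ (-b) / b := by
  rw [integral_Ioi_rpow_of_lt (by linarith) hx]
  have h : -1 - b + 1 = -b := by ring
  rw [h]
  field_simp

private lemma ivlInt (b u v : ℝ) (hb : b ≠ 0) (hu : 0 < u) (hv : 0 < v) :
    ∫ y in u..v, y ^ (-1 - b) = (v ^ (-b) - u ^ (-b)) / (-b) := by
  rw [integral_rpow (Or.inr ⟨by intro h; apply hb; linarith, notMem_uIcc_of_lt hu hv⟩)]
  have h : -1 - b + 1 = -b := by ring
  rw [h]

private lemma Tsum_eq (ε c : ℝ) (hε : 0 < ε) (hc : 0 < c) :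
    Tsum ε c = c ^ (-(4*ε)) / (8*ε^3) - c ^ (-(3*ε)) / (6*ε^3)
      - c ^ (-(2*ε)) / (4*ε^3) + c ^ (-ε) / (2*ε^3) := by
  have h2 : (0:ℝ) < 2*ε := by linarith
  have hT1 : (∫ x in Ioi c, x ^ (-1 - ε) * (∫ y in Ioi x, y ^ (-1 - 2 * ε)) *
      (∫ z in Ioi x, z ^ (-1 - ε)))
      = ∫ x in Ioi c, x ^ (-1 - 4*ε) * (1/(2*ε^2)) := by
    apply setIntegral_congr_fun measurableSet_Ioi
    intro x hx
    have hx0 : 0 < x := lt_trans hc hx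
    simp only
    rw [ioiInt (2*ε) x h2 hx0, ioiInt ε x hε hx0,
      show (-1 - 4*ε : ℝ) = (-1 - ε) + (-(2*ε)) + (-ε) by ring,
      Real.rpow_add hx0, Real.rpow_add hx0]
    field_simp
  have hT2 : (∫ x in Ioi c, x ^ (-1 - ε) * (∫ y in Ioi x, y ^ (-1 - 2 * ε)))
      = ∫ x in Ioi c, x ^ (-1 - 3*ε) * (1/(2*ε)) := by
    apply setIntegral_congr_fun measurableSet_Ioi
    intro x hx
    have hx0 : 0 < x := lt_trans hc hx
    simp only
    rw [ioiInt (2*ε) x h2 hx0,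
      show (-1 - 3*ε : ℝ) = (-1 - ε) + (-(2*ε)) by ring, Real.rpow_add hx0]
    field_simp
  have hT3 : (∫ x in Ioi c, x ^ (-1 - ε) * (∫ z in Ioi x, z ^ (-1 - ε)))
      = ∫ x in Ioi c, x ^ (-1 - 2*ε) * (1/ε) := by
    apply setIntegral_congr_fun measurableSet_Ioi
    intro x hx
    have hx0 : 0 < x := lt_trans hc hx
    simp only
    rw [ioiInt ε x hε hx0,
      show (-1 - 2*ε : ℝ) = (-1 - ε) + (-ε) by ring, Real.rpow_add hx0]
    field_simp
  unfold Tsum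
  rw [hT1, hT2, hT3, integral_mul_const, integral_mul_const, integral_mul_const,
    ioiInt (4*ε) c (by linarith) hc, ioiInt (3*ε) c (by linarith) hc,
    ioiInt (2*ε) c h2 hc, ioiInt ε c hε hc, ioiInt (2*ε) 1 h2 one_pos,
    ioiInt ε 1 hε one_pos, Real.one_rpow, Real.one_rpow]
  have h4 : c ^ (-(4*ε)) = c ^ (-(4*ε)) := rfl
  field_simp
  ring

theorem toy_renormalized_amplitude (ε c : ℝ) (hε : 0 < ε) (hc : 0 < c) :
    Tsum ε c - Tsum ε 1
      = -∫ x in (1 : ℝ)..c, x ^ (-1 - ε) * (∫ y in (1 : ℝ)..x, y ^ (-1 - 2 * ε)) *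
          (∫ z in (1 : ℝ)..x, z ^ (-1 - ε)) := by
  have h2 : (0:ℝ) < 2*ε := by linarith
  have hε' : ε ≠ 0 := ne_of_gt hε
  have hcong : (∫ x in (1 : ℝ)..c, x ^ (-1 - ε) * (∫ y in (1 : ℝ)..x, y ^ (-1 - 2 * ε)) *
          (∫ z in (1 : ℝ)..x, z ^ (-1 - ε)))
      = ∫ x in (1 : ℝ)..c,
          (x ^ (-1 - 4*ε) - x ^ (-1 - 3*ε) - x ^ (-1 - 2*ε) + x ^ (-1 - ε)) * (1/(2*ε^2)) := by
    apply intervalIntegral.integral_congr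
    intro x hx
    have hx0 : 0 < x := lt_of_lt_of_le (lt_min one_pos hc) hx.1
    simp only
    rw [ivlInt (2*ε) 1 x (ne_of_gt h2) one_pos hx0, ivlInt ε 1 x hε' one_pos hx0,
      show (-1 - 4*ε : ℝ) = (-1 - ε) + (-(2*ε)) + (-ε) by ring,
      show (-1 - 3*ε : ℝ) = (-1 - ε) + (-(2*ε)) by ring,
      show (-1 - 2*ε : ℝ) = (-1 - ε) + (-ε) by ring]
    simp only [Real.one_rpow, Real.rpow_add hx0]
    field_simp
    ring
  have h0 : (0:ℝ) ∉ Set.uIcc (1:ℝ) c := notMem_uIcc_of_lt one_pos hc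
  have int : ∀ b : ℝ, IntervalIntegrable (fun x : ℝ => x ^ (-1 - b)) volume 1 c :=
    fun b => intervalIntegral.intervalIntegrable_rpow (Or.inr h0)
  rw [hcong, intervalIntegral.integral_mul_const,
    intervalIntegral.integral_add (((int (4*ε)).sub (int (3*ε))).sub (int (2*ε))) (int ε),
    intervalIntegral.integral_sub ((int (4*ε)).sub (int (3*ε))) (int (2*ε)),
    intervalIntegral.integral_sub (int (4*ε)) (int (3*ε)),
    ivlInt (4*ε) 1 c (by positivity) one_pos hc,
    ivlInt (3*ε) 1 c (by positivity) one_pos hc,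
    ivlInt (2*ε) 1 c (by positivity) one_pos hc,
    ivlInt ε 1 c hε' one_pos hc,
    Tsum_eq ε c hε hc, Tsum_eq ε 1 hε one_pos]
  simp only [Real.one_rpow]
  field_simp
  ring
end

section
/- For every fixed real c > 0, the renormalized toy-model amplitude X_r(ε, c) = −∫_1^c x^(−1−ε)(∫_1^x y^(−1−2ε) dy)(∫_1^x z^(−1−ε) dz) dx (oriented interval integrals) converges to the finite limit −(log c)³/3 as ε → 0⁺; in particular the renormalized amplitude is finite in the limit ε → 0, even though each individual unrenormalized integral diverges in that limit. -/
open MeasureTheory Set Filter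

private lemma aux_slope_tendsto (x : ℝ) (hx : 0 < x) (k : ℝ) (hk : k ≠ 0) :
    Tendsto (fun ε : ℝ => (x ^ (k * ε) - 1) / (k * ε)) (nhdsWithin 0 (Ioi 0))
      (nhds (Real.log x)) := by
  have hd : HasDerivAt (fun t : ℝ => x ^ t) (Real.log x) 0 := by
    simpa using (Real.hasStrictDerivAt_const_rpow hx 0).hasDerivAt
  rw [hasDerivAt_iff_tendsto_slope] at hd
  have hcomp : Tendsto (fun ε : ℝ => k * ε) (nhdsWithin 0 (Ioi 0))
      (nhdsWithin 0 {(0 : ℝ)}ᶜ) := by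
    rw [tendsto_nhdsWithin_iff]
    constructor
    · have : Tendsto (fun ε : ℝ => k * ε) (nhds 0) (nhds (k * 0)) :=
        (continuous_const.mul continuous_id).tendsto 0
      simpa using this.mono_left nhdsWithin_le_nhds
    · filter_upwards [self_mem_nhdsWithin] with ε hε
      have : (ε : ℝ) ≠ 0 := ne_of_gt hε
      simp [mul_ne_zero hk this]
  have := hd.comp hcomp
  refine this.congr fun ε => ?_
  simp [Function.comp, slope_def_field, Real.rpow_zero]

private lemma aux_rpow_tendsto (x : ℝ) (hx : 0 < x) :
    Tendsto (fun ε : ℝ => x ^ (-1 - ε)) (nhdsWithin 0 (Ioi 0))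
      (nhds (x ^ (-1 : ℝ))) := by
  have h : ∀ t : ℝ, x ^ t = Real.exp (Real.log x * t) := fun t =>
    Real.rpow_def_of_pos hx t
  simp only [h]
  have : Tendsto (fun ε : ℝ => Real.log x * (-1 - ε)) (nhds 0)
      (nhds (Real.log x * (-1 - 0))) :=
    (continuous_const.mul (continuous_const.sub continuous_id)).tendsto 0
  have := (Real.continuous_exp.tendsto _).comp this
  simpa [Function.comp_def] using this.mono_left nhdsWithin_le_nhds

theorem toy_renormalized_amplitude_finite_limit (c : ℝ) (hc : 0 < c) :
    Tendsto
      (fun ε : ℝ =>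
        -∫ x in (1 : ℝ)..c, x ^ (-1 - ε) * (∫ y in (1 : ℝ)..x, y ^ (-1 - 2 * ε)) *
          (∫ z in (1 : ℝ)..x, z ^ (-1 - ε)))
      (nhdsWithin 0 (Ioi 0)) (nhds (-(Real.log c) ^ 3 / 3)) := by
  set m : ℝ := min 1 c with hm_def
  set M : ℝ := max 1 c with hM_def
  have hm : 0 < m := lt_min one_pos hc
  have hm1 : m ≤ 1 := min_le_left _ _
  have h1M : (1 : ℝ) ≤ M := le_max_left _ _
  have hmM : m ≤ M := le_trans hm1 h1M
  set G : ℝ → ℝ → ℝ := fun ε x =>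
    x ^ (-1 - ε) * ((x ^ ((-2 : ℝ) * ε) - 1) / ((-2 : ℝ) * ε)) *
      ((x ^ ((-1 : ℝ) * ε) - 1) / ((-1 : ℝ) * ε)) with hG_def
  -- positivity on the intervals
  have hpos_uIcc : ∀ x ∈ uIcc (1 : ℝ) c, 0 < x := by
    intro x hx
    have := hx.1
    exact lt_of_lt_of_le hm this
  have hmem_uIoc : ∀ x ∈ Set.uIoc (1 : ℝ) c, m < x ∧ x ≤ M := fun x hx => ⟨hx.1, hx.2⟩
  -- the closed form of the inner integrals, valid for ε > 0 and x > 0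
  have hinner : ∀ ε : ℝ, 0 < ε → ∀ x : ℝ, 0 < x → ∀ k : ℝ, k < 0 →
      (∫ y in (1 : ℝ)..x, y ^ (-1 + k * ε)) = (x ^ (k * ε) - 1) / (k * ε) := by
    intro ε hε x hx k hk
    have hne : (-1 : ℝ) + k * ε ≠ -1 := by
      have : k * ε < 0 := mul_neg_of_neg_of_pos hk hε
      intro h
      nlinarith
    have h0 : (0 : ℝ) ∉ uIcc (1 : ℝ) x := notMem_uIcc_of_lt one_pos hx
    rw [integral_rpow (Or.inr ⟨hne, h0⟩)]
    have h1 : (-1 : ℝ) + k * ε + 1 = k * ε := by ring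
    rw [h1, Real.one_rpow]
  -- eventual equality of the integrand with the closed form
  have heq : ∀ᶠ ε in nhdsWithin (0:ℝ) (Ioi 0),
      (-∫ x in (1 : ℝ)..c, x ^ (-1 - ε) * (∫ y in (1 : ℝ)..x, y ^ (-1 - 2 * ε)) *
          (∫ z in (1 : ℝ)..x, z ^ (-1 - ε)))
        = -∫ x in (1 : ℝ)..c, G ε x := by
    filter_upwards [self_mem_nhdsWithin] with ε (hε : (0:ℝ) < ε)
    congr 1
    apply intervalIntegral.integral_congr
    intro x hx
    have hx0 : 0 < x := hpos_uIcc x hx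
    have e1 : (-1 : ℝ) - 2 * ε = -1 + (-2 : ℝ) * ε := by ring
    have e2 : (-1 : ℝ) - ε = -1 + (-1 : ℝ) * ε := by ring
    simp only [hG_def]
    rw [e1, e2, hinner ε hε x hx0 (-2) (by norm_num),
      hinner ε hε x hx0 (-1) (by norm_num)]
  rw [show -(Real.log c) ^ 3 / 3 = -((Real.log c) ^ 3 / 3) by ring]
  refine Tendsto.congr' (heq.mono fun ε h => h.symm) (Tendsto.neg ?_)
  -- value of the limit integral
  have hval : (∫ x in (1 : ℝ)..c, x ^ (-1 : ℝ) * Real.log x * Real.log x)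
      = (Real.log c) ^ 3 / 3 := by
    have := intervalIntegral.integral_eq_sub_of_hasDerivAt
      (f := fun x : ℝ => Real.log x ^ 3 / 3)
      (f' := fun x : ℝ => x ^ (-1 : ℝ) * Real.log x * Real.log x)
      (a := 1) (b := c) ?_ ?_
    · rw [this]; simp
    · intro x hx
      have hx0 : 0 < x := hpos_uIcc x hx
      have h : HasDerivAt (fun x : ℝ => Real.log x ^ 3 / 3) _ x :=
        ((Real.hasDerivAt_log hx0.ne').pow 3).div_const 3
      refine h.congr_deriv ?_
      simp only [Real.rpow_neg_one]
      push_cast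
      ring
    · apply ContinuousOn.intervalIntegrable
      apply ContinuousOn.mul
      apply ContinuousOn.mul
      · exact fun x hx => ((Real.continuousAt_rpow_const x _
          (Or.inl (hpos_uIcc x hx).ne')).continuousWithinAt)
      · exact fun x hx => (Real.continuousAt_log (hpos_uIcc x hx).ne').continuousWithinAt
      · exact fun x hx => (Real.continuousAt_log (hpos_uIcc x hx).ne').continuousWithinAt
  rw [← hval]
  -- dominated convergence
  set K : ℝ := m ^ (-3 : ℝ) with hK_def
  have hK0 : 0 < K := Real.rpow_pos_of_pos hm _
  apply intervalIntegral.tendsto_integral_filter_of_dominated_convergence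
    (bound := fun _ => K * (K * (M - m)) * (K * (M - m)))
  · -- measurability
    filter_upwards [self_mem_nhdsWithin] with ε (hε : (0:ℝ) < ε)
    apply ContinuousOn.aestronglyMeasurable _ measurableSet_uIoc
    have hsub : Set.uIoc (1 : ℝ) c ⊆ Ioi (0 : ℝ) := fun x hx =>
      lt_trans hm (hmem_uIoc x hx).1
    have hcont : ∀ p : ℝ, ContinuousOn (fun x : ℝ => x ^ p) (Ioi (0:ℝ)) :=
      fun p x hx => (Real.continuousAt_rpow_const x p (Or.inl (ne_of_gt hx))).continuousWithinAt
    exact (((hcont _).mul (((hcont _).sub continuousOn_const).div_const _)).mul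
      (((hcont _).sub continuousOn_const).div_const _)).mono hsub
  · -- bound
    filter_upwards [Ioo_mem_nhdsGT_of_mem (Set.left_mem_Ico.mpr one_pos)]
      with ε (hε : ε ∈ Ioo (0:ℝ) 1)
    refine Eventually.of_forall fun x hx => ?_
    obtain ⟨hmx, hxM⟩ := hmem_uIoc x hx
    have hx0 : 0 < x := lt_trans hm hmx
    -- rewrite G back as the original integrand on this point
    have hGx : G ε x = x ^ (-1 - ε) * (∫ y in (1 : ℝ)..x, y ^ (-1 - 2 * ε)) *
        (∫ z in (1 : ℝ)..x, z ^ (-1 - ε)) := by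
      have e1 : (-1 : ℝ) - 2 * ε = -1 + (-2 : ℝ) * ε := by ring
      have e2 : (-1 : ℝ) - ε = -1 + (-1 : ℝ) * ε := by ring
      simp only [hG_def]
      rw [e1, e2, hinner ε hε.1 x hx0 (-2) (by norm_num),
        hinner ε hε.1 x hx0 (-1) (by norm_num)]
    rw [hGx]
    have hxb : ∀ y : ℝ, m ≤ y → ∀ p : ℝ, -3 ≤ p → p ≤ 0 → y ^ p ≤ K := by
      intro y hy p hp3 hp0
      calc y ^ p ≤ m ^ p := Real.rpow_le_rpow_of_nonpos hm hy hp0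
        _ ≤ K := Real.rpow_le_rpow_of_exponent_ge hm hm1 hp3
    have hyIoc : ∀ y ∈ Set.uIoc (1:ℝ) x, m ≤ y := by
      intro y hy
      have h1 : m ≤ min 1 x := le_min hm1 hmx.le
      exact le_trans h1 hy.1.le
    have hI1 : ‖∫ y in (1 : ℝ)..x, y ^ (-1 - 2 * ε)‖ ≤ K * (M - m) := by
      have := intervalIntegral.norm_integral_le_of_norm_le_const
        (C := K) (f := fun y : ℝ => y ^ (-1 - 2*ε)) (a := 1) (b := x) ?_
      · refine le_trans this ?_
        have hx1 : |x - 1| ≤ M - m := by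
          rw [abs_le]
          constructor <;> [linarith [hmx.le]; linarith [hxM]]
        exact mul_le_mul_of_nonneg_left hx1 hK0.le
      · intro y hy
        have hym := hyIoc y hy
        have hy0 : 0 < y := lt_of_lt_of_le hm hym
        rw [Real.norm_rpow_of_nonneg hy0.le, Real.norm_eq_abs, abs_of_pos hy0]
        exact hxb y hym _ (by linarith [hε.2]) (by linarith [hε.1])
    have hI2 : ‖∫ z in (1 : ℝ)..x, z ^ (-1 - ε)‖ ≤ K * (M - m) := by
      have := intervalIntegral.norm_integral_le_of_norm_le_const
        (C := K) (f := fun y : ℝ => y ^ (-1 - ε)) (a := 1) (b := x) ?_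
      · refine le_trans this ?_
        have hx1 : |x - 1| ≤ M - m := by
          rw [abs_le]
          constructor <;> [linarith [hmx.le]; linarith [hxM]]
        exact mul_le_mul_of_nonneg_left hx1 hK0.le
      · intro y hy
        have hym := hyIoc y hy
        have hy0 : 0 < y := lt_of_lt_of_le hm hym
        rw [Real.norm_rpow_of_nonneg hy0.le, Real.norm_eq_abs, abs_of_pos hy0]
        exact hxb y hym _ (by linarith [hε.2]) (by linarith [hε.1])
    have hF1 : ‖x ^ (-1 - ε)‖ ≤ K := by
      rw [Real.norm_rpow_of_nonneg hx0.le, Real.norm_eq_abs, abs_of_pos hx0]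
      exact hxb x (le_of_lt hmx) _ (by linarith [hε.2]) (by linarith [hε.1])
    have hMm0 : (0:ℝ) ≤ M - m := by linarith
    have hKMm : (0:ℝ) ≤ K * (M - m) := mul_nonneg hK0.le hMm0
    calc ‖x ^ (-1 - ε) * (∫ y in (1 : ℝ)..x, y ^ (-1 - 2 * ε)) *
          (∫ z in (1 : ℝ)..x, z ^ (-1 - ε))‖
        = ‖x ^ (-1 - ε)‖ * ‖∫ y in (1 : ℝ)..x, y ^ (-1 - 2 * ε)‖ *
          ‖∫ z in (1 : ℝ)..x, z ^ (-1 - ε)‖ := by rw [norm_mul, norm_mul]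
      _ ≤ K * (K * (M - m)) * (K * (M - m)) :=
          mul_le_mul (mul_le_mul hF1 hI1 (norm_nonneg _) hK0.le) hI2 (norm_nonneg _)
            (mul_nonneg hK0.le hKMm)
  · exact intervalIntegrable_const
  · -- pointwise limit
    refine Eventually.of_forall fun x hx => ?_
    have hx0 : 0 < x := lt_trans hm (hmem_uIoc x hx).1
    simp only [hG_def]
    exact ((aux_rpow_tendsto x hx0).mul
      (aux_slope_tendsto x hx0 (-2) (by norm_num))).mul
      (aux_slope_tendsto x hx0 (-1) (by norm_num))
end
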